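/- Let a ≥ 1 be a natural number. Then ∑_{d ∣ 4a²} μ(d)·(log d)² equals: 2·(log 2)·(log p) if a = 2^i·p^j for some odd prime p and integers i ≥ 0, j ≥ 1; −(log 2)² if a = 2^i for some i ≥ 0; and 0 if a has at least two distinct odd prime divisors. -/

import Mathlib

/-!
Only squarefree divisors contribute, so the sum is `∑ (-1)^|t| (∑_{p ∈ t} log p)²` over the
subsets `t` of the set `{2} ∪ P` of prime factors of `4a²`, `P` being the odd primes dividing `a`.
An alternating sum over the subsets of `s` annihilates `(∑_{p ∈ t} log p)^k` as soon as
`|s| > k`. Splitting off the prime `2` leaves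
`-(log 2)² [P = ∅] - 2 log 2 · ∑_{t ⊆ P} (-1)^|t| ∑_{p ∈ t} log p`, and the last sum is
`-log p` if `P = {p}` and `0` otherwise.
-/

open Finset

namespace Finset

variable {α R : Type*} [DecidableEq α] [CommRing R]

theorem sum_powerset_neg_one_pow_card_eq_ite (s : Finset α) :
    ∑ t ∈ s.powerset, (-1 : R) ^ #t = if s = ∅ then 1 else 0 := by
  have := congrArg (Int.cast : ℤ → R) (sum_powerset_neg_one_pow_card (x := s))
  push_cast at this
  simpa [apply_ite (Int.cast : ℤ → R)] using this

theorem sum_powerset_insert_neg_one_pow_card_mul {a : α} {s : Finset α} (ha : a ∉ s)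
    (g : Finset α → R) :
    ∑ t ∈ (insert a s).powerset, (-1) ^ #t * g t =
      -∑ t ∈ s.powerset, (-1) ^ #t * (g (insert a t) - g t) := by
  have hsign : ∀ t ∈ s.powerset, (-1 : R) ^ #(insert a t) * g (insert a t) =
      -((-1) ^ #t * g (insert a t)) := fun t ht => by
    rw [card_insert_of_notMem fun hat => ha (mem_powerset.mp ht hat), pow_succ]
    ring
  rw [sum_powerset_insert ha, sum_congr rfl hsign, sum_neg_distrib]
  simp only [mul_sub, sum_sub_distrib]
  ring

theorem sum_powerset_neg_one_pow_card_mul_sum (f : α → R) (s : Finset α) :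
    ∑ t ∈ s.powerset, (-1) ^ #t * ∑ x ∈ t, f x =
      if #s = 1 then -∑ x ∈ s, f x else 0 := by
  rcases s.eq_empty_or_nonempty with rfl | ⟨a, ha⟩
  · simp
  have ha' : a ∉ s.erase a := notMem_erase a s
  have hstep : ∀ t ∈ (s.erase a).powerset,
      (-1 : R) ^ #t * (∑ x ∈ insert a t, f x - ∑ x ∈ t, f x) = (-1) ^ #t * f a := fun t ht => by
    rw [sum_insert fun hat => ha' (mem_powerset.mp ht hat), add_sub_cancel_right]
  rw [← insert_erase ha, sum_powerset_insert_neg_one_pow_card_mul ha', sum_congr rfl hstep,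
    ← sum_mul, sum_powerset_neg_one_pow_card_eq_ite, card_insert_of_notMem ha']
  by_cases h : s.erase a = ∅ <;> simp [h]

theorem sum_powerset_insert_neg_one_pow_card_mul_sq_sum (f : α → R) {a : α} {s : Finset α}
    (ha : a ∉ s) :
    ∑ t ∈ (insert a s).powerset, (-1) ^ #t * (∑ x ∈ t, f x) ^ 2 =
      -(if s = ∅ then f a ^ 2 else 0) + 2 * f a * (if #s = 1 then ∑ x ∈ s, f x else 0) := by
  rw [sum_powerset_insert_neg_one_pow_card_mul ha]
  have hexpand : ∀ t ∈ s.powerset,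
      (-1 : R) ^ #t * ((∑ x ∈ insert a t, f x) ^ 2 - (∑ x ∈ t, f x) ^ 2) =
        (-1) ^ #t * f a ^ 2 + 2 * f a * ((-1) ^ #t * ∑ x ∈ t, f x) := fun t ht => by
    rw [sum_insert fun hat => ha (mem_powerset.mp ht hat)]
    ring
  rw [sum_congr rfl hexpand, sum_add_distrib, ← sum_mul, ← mul_sum,
    sum_powerset_neg_one_pow_card_eq_ite, sum_powerset_neg_one_pow_card_mul_sum]
  split_ifs <;> ring

end Finset

open ArithmeticFunction
open scoped ArithmeticFunction.Moebius

theorem ArithmeticFunction.moebius_prod_primes {t : Finset ℕ} (ht : ∀ p ∈ t, p.Prime) :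
    μ (∏ p ∈ t, p) = (-1) ^ #t := by
  rw [isMultiplicative_moebius.map_prod_of_prime t ht,
    prod_congr rfl fun p hp => moebius_apply_prime (ht p hp), prod_const]

theorem Nat.sum_divisors_moebius_mul {R : Type*} [CommRing R] {n : ℕ} (hn : n ≠ 0)
    (g : ℕ → R) :
    ∑ d ∈ n.divisors, (μ d : R) * g d =
      ∑ t ∈ n.primeFactors.powerset, (-1) ^ #t * g (∏ p ∈ t, p) := by
  rw [← sum_filter_of_ne (p := Squarefree) fun d _ hd => ?_,
    Nat.sum_divisors_filter_squarefree hn, Nat.factors_eq]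
  · refine sum_congr (congrArg powerset n.toFinset_factors) fun t ht => ?_
    rw [show t.val.prod = ∏ p ∈ t, p from prod_val t, moebius_prod_primes fun p hp =>
      Nat.prime_of_mem_primeFactors (mem_powerset.mp ht hp)]
    push_cast
    rfl
  · by_contra hsq
    simp [moebius_eq_zero_of_not_squarefree hsq] at hd

theorem Nat.sum_divisors_moebius_mul_log_sq {n : ℕ} (hn : n ≠ 0) :
    ∑ d ∈ n.divisors, (μ d : ℝ) * Real.log d ^ 2 =
      ∑ t ∈ n.primeFactors.powerset, (-1) ^ #t * (∑ p ∈ t, Real.log p) ^ 2 := by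
  rw [Nat.sum_divisors_moebius_mul hn]
  refine sum_congr rfl fun t ht => ?_
  rw [Nat.cast_prod, Real.log_prod fun p hp => ?_]
  exact_mod_cast (Nat.prime_of_mem_primeFactors (mem_powerset.mp ht hp)).ne_zero

theorem Nat.primeFactors_pow_mul_erase {q m : ℕ} (hq : q.Prime) (i : ℕ) (hm : m ≠ 0) :
    (q ^ i * m).primeFactors.erase q = m.primeFactors.erase q := by
  rcases i.eq_zero_or_pos with rfl | hi
  · rw [pow_zero, one_mul]
  · rw [Nat.primeFactors_mul (pow_ne_zero i hq.ne_zero) hm, Nat.primeFactors_prime_pow hi.ne' hq,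
      singleton_union, erase_insert_eq_erase]

theorem Nat.primeFactors_four_mul_sq {a : ℕ} (ha : a ≠ 0) :
    (4 * a ^ 2).primeFactors = insert 2 (a.primeFactors.erase 2) := by
  rw [show 4 * a ^ 2 = (2 * a) ^ 2 by ring, Nat.primeFactors_pow _ two_ne_zero,
    Nat.primeFactors_mul two_ne_zero ha, Nat.prime_two.primeFactors, singleton_union,
    ← erase_insert_eq_erase, insert_erase (mem_insert_self 2 _)]

theorem mulog2_four_a_sq (a : ℕ) (ha : 1 ≤ a) :
    (∀ p i j : ℕ, p.Prime → p ≠ 2 → 1 ≤ j → a = 2 ^ i * p ^ j →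
      ∑ d ∈ (4 * a ^ 2).divisors, (ArithmeticFunction.moebius d : ℝ) * (Real.log d) ^ 2 =
        2 * Real.log 2 * Real.log p) ∧
    (∀ i : ℕ, a = 2 ^ i →
      ∑ d ∈ (4 * a ^ 2).divisors, (ArithmeticFunction.moebius d : ℝ) * (Real.log d) ^ 2 =
        -(Real.log 2) ^ 2) ∧
    (2 ≤ (a.primeFactors.erase 2).card →
      ∑ d ∈ (4 * a ^ 2).divisors, (ArithmeticFunction.moebius d : ℝ) * (Real.log d) ^ 2 = 0) := by
  have ha0 : a ≠ 0 := Nat.one_le_iff_ne_zero.mp ha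
  have hsum := Nat.sum_divisors_moebius_mul_log_sq (n := 4 * a ^ 2) (by positivity)
  rw [Nat.primeFactors_four_mul_sq ha0, sum_powerset_insert_neg_one_pow_card_mul_sq_sum _
    (notMem_erase 2 _)] at hsum
  simp only [Nat.cast_ofNat] at hsum
  refine ⟨fun p i j hp hp2 hj hpa => ?_, fun i hpa => ?_, fun hcard => ?_⟩
  · have hodd : a.primeFactors.erase 2 = {p} := by
      rw [hpa, Nat.primeFactors_pow_mul_erase Nat.prime_two i (pow_ne_zero j hp.ne_zero),
        Nat.primeFactors_prime_pow (by omega) hp, erase_eq_of_notMem (by simpa using hp2.symm)]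
    rw [hsum, hodd]
    simp
  · have hodd : a.primeFactors.erase 2 = ∅ := by
      rw [hpa, ← mul_one (2 ^ i), Nat.primeFactors_pow_mul_erase Nat.prime_two i one_ne_zero]
      simp
    rw [hsum, hodd]
    simp
  · have hne : a.primeFactors.erase 2 ≠ ∅ := by
      rw [Ne, ← card_eq_zero]
      omega
    rw [hsum, if_neg hne, if_neg (by omega)]
    simp
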